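/- arXiv:2211.08108 — 3 statements merged into one kernel-verified Lean document; each statement's English description precedes it below -/
import Mathlib

section
/- Let λ ≥ 0. Then (1/4)·(9·cos(2π√λ) − 1) ∈ [−2, 2] if and only if there exist m ∈ ℤ and l ∈ (−1/2, 1/2] such that λ = (m + a(l))². -/
/-- The Floquet exponent function of the necklace graph. -/
noncomputable def blochA (l : ℝ) : ℝ :=
  (1 / (2 * Real.pi)) * Real.arccos ((1 / 9) * (8 * Real.cos (2 * Real.pi * l) + 1))

open Real

lemma two_pi_pos' : 0 < 2 * Real.pi := by positivity

lemma blochA_mem (l : ℝ) : blochA l ∈ Set.Icc (0 : ℝ) (1 / 2) := by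
  have h0 := Real.arccos_nonneg ((1 / 9) * (8 * Real.cos (2 * Real.pi * l) + 1))
  have h1 := Real.arccos_le_pi ((1 / 9) * (8 * Real.cos (2 * Real.pi * l) + 1))
  constructor
  · unfold blochA; positivity
  · unfold blochA
    rw [div_mul_eq_mul_div, one_mul, div_le_iff₀ two_pi_pos']
    linarith

lemma cos_two_pi_blochA (l : ℝ) :
    Real.cos (2 * Real.pi * blochA l) = (1 / 9) * (8 * Real.cos (2 * Real.pi * l) + 1) := by
  have hpi := Real.pi_ne_zero
  have h : 2 * Real.pi * blochA l
      = Real.arccos ((1 / 9) * (8 * Real.cos (2 * Real.pi * l) + 1)) := by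
    unfold blochA; field_simp
  rw [h, Real.cos_arccos]
  · nlinarith [Real.neg_one_le_cos (2 * Real.pi * l)]
  · nlinarith [Real.cos_le_one (2 * Real.pi * l)]

lemma exists_blochA_eq {a : ℝ} (ha0 : 0 ≤ a) (ha1 : a ≤ 1 / 2)
    (hc : -(7 / 9) ≤ Real.cos (2 * Real.pi * a)) :
    ∃ l ∈ Set.Ioc (-(1 / 2) : ℝ) (1 / 2), blochA l = a := by
  have hc1 := Real.cos_le_one (2 * Real.pi * a)
  set x : ℝ := (9 * Real.cos (2 * Real.pi * a) - 1) / 8 with hx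
  have hx1 : -1 ≤ x := by rw [hx]; linarith
  have hx2 : x ≤ 1 := by rw [hx]; linarith
  set l : ℝ := (1 / (2 * Real.pi)) * Real.arccos x with hl
  have harc0 := Real.arccos_nonneg x
  have harc1 := Real.arccos_le_pi x
  have hpi := Real.pi_pos
  have hl0 : 0 ≤ l := by rw [hl]; positivity
  have hl1 : l ≤ 1 / 2 := by
    rw [hl, div_mul_eq_mul_div, one_mul, div_le_iff₀ two_pi_pos']; linarith
  refine ⟨l, ⟨by linarith, hl1⟩, ?_⟩
  have hcl : Real.cos (2 * Real.pi * l) = x := by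
    have h : 2 * Real.pi * l = Real.arccos x := by
      rw [hl]; field_simp
    rw [h, Real.cos_arccos hx1 hx2]
  unfold blochA
  rw [hcl]
  have h9 : (1 / 9 : ℝ) * (8 * x + 1) = Real.cos (2 * Real.pi * a) := by
    rw [hx]; ring
  rw [h9, Real.arccos_cos (by positivity) (by nlinarith)]
  field_simp

/-- Characterization of the Floquet–Bloch spectrum: for `λ ≥ 0` the
Hill discriminant lies in `[-2, 2]` iff `λ` is one of the band values `(m + a(l))²`. -/
theorem hillDiscriminant_mem_Icc_iff_band (lam : ℝ) (hlam : 0 ≤ lam) :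
    (1 / 4) * (9 * Real.cos (2 * Real.pi * Real.sqrt lam) - 1) ∈ Set.Icc (-2 : ℝ) 2 ↔
      ∃ m : ℤ, ∃ l ∈ Set.Ioc (-(1 / 2) : ℝ) (1 / 2), lam = ((m : ℝ) + blochA l) ^ 2 := by
  constructor
  · rintro ⟨h1, _⟩
    set s : ℝ := Real.sqrt lam with hs
    have hs2 : s ^ 2 = lam := Real.sq_sqrt hlam
    set t : ℝ := s - round s with ht
    have htb : |t| ≤ 1 / 2 := abs_sub_round s
    have hcosa : Real.cos (2 * Real.pi * |t|) = Real.cos (2 * Real.pi * s) := by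
      have h2 : 2 * Real.pi * |t| = |2 * Real.pi * t| := by
        rw [abs_mul, abs_of_pos two_pi_pos']
      rw [h2, Real.cos_abs,
        show 2 * Real.pi * t = 2 * Real.pi * s - (round s : ℤ) * (2 * Real.pi) by
          push_cast; rw [ht]; ring,
        Real.cos_sub_int_mul_two_pi]
    obtain ⟨l, hl, hbl⟩ := exists_blochA_eq (abs_nonneg t) htb
      (by rw [hcosa]; linarith)
    rcases le_or_gt 0 t with h | h
    · refine ⟨round s, l, hl, ?_⟩
      rw [hbl, abs_of_nonneg h, ht]
      push_cast
      nlinarith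
    · refine ⟨-(round s), l, hl, ?_⟩
      rw [hbl, abs_of_neg h, ht]
      push_cast
      nlinarith
  · rintro ⟨m, l, _, rfl⟩
    have hmem := blochA_mem l
    obtain ⟨ha0, ha1⟩ := hmem
    have hcb := cos_two_pi_blochA l
    have hc1 := Real.cos_le_one (2 * Real.pi * l)
    have hc2 := Real.neg_one_le_cos (2 * Real.pi * l)
    have hsq : Real.sqrt (((m : ℝ) + blochA l) ^ 2) = |(m : ℝ) + blochA l| :=
      Real.sqrt_sq_eq_abs _
    have hcos : Real.cos (2 * Real.pi * Real.sqrt (((m : ℝ) + blochA l) ^ 2))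
        = Real.cos (2 * Real.pi * blochA l) := by
      rw [hsq, show 2 * Real.pi * |(m : ℝ) + blochA l| = |2 * Real.pi * ((m : ℝ) + blochA l)| by
        rw [abs_mul, abs_of_pos two_pi_pos'], Real.cos_abs,
        show 2 * Real.pi * ((m : ℝ) + blochA l)
          = 2 * Real.pi * blochA l - (-m : ℤ) * (2 * Real.pi) by push_cast; ring,
        Real.cos_sub_int_mul_two_pi]
    rw [hcos, hcb]
    constructor <;> [nlinarith; nlinarith]
end

section
/- Let ω > 0, α ≥ 0, α₀ > 0, σ > 1, let κ be a positive odd integer and K > 0 be such that ω²k² ≥ α + α₀ for all k ∈ κℤ_odd with |k| > K. Assume δ := inf{ | |m + a(l)| − √(ω²k² − α) | : l ∈ (−1/2, 1/2], m ∈ ℤ, k ∈ κℤ_odd with |k| > K } > 0. Then ∫_{−1/2}^{1/2} ∑_{m ∈ ℤ} ∑_{k ∈ κℤ_odd, |k| > K} |(m + a(l))² − ω²k² + α|^{−σ} dl < ∞. -/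
open MeasureTheory

/-- The set `κ·ℤ_odd = {κ·j : j odd}`. -/
def kappaOdd (κ : ℤ) : Set ℤ := {k | ∃ j : ℤ, Odd j ∧ k = κ * j}

set_option linter.unusedVariables false

lemma blochA_nonneg (l : ℝ) : 0 ≤ blochA l :=
  mul_nonneg (by positivity) (Real.arccos_nonneg _)

lemma blochA_le_half (l : ℝ) : blochA l ≤ 1 / 2 := by
  have hπ := Real.pi_pos
  have h := Real.arccos_le_pi ((1 / 9) * (8 * Real.cos (2 * Real.pi * l) + 1))
  have : (1 / (2 * Real.pi)) * Real.arccos ((1 / 9) * (8 * Real.cos (2 * Real.pi * l) + 1))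
      ≤ (1 / (2 * Real.pi)) * Real.pi :=
    mul_le_mul_of_nonneg_left h (by positivity)
  calc blochA l ≤ (1 / (2 * Real.pi)) * Real.pi := this
    _ = 1 / 2 := by field_simp

/-- The reference sum `Z`. -/
noncomputable def Zsum (σ : ℝ) : ENNReal := ∑' j : ℤ, ENNReal.ofReal (|(j : ℝ)| ^ (-σ))

lemma Zsum_lt_top {σ : ℝ} (hσ : 1 < σ) : Zsum σ < ⊤ := by
  rw [Zsum, ← ENNReal.ofReal_tsum_of_nonneg (fun j => Real.rpow_nonneg (abs_nonneg _) _)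
    (Real.summable_abs_int_rpow hσ)]
  exact ENNReal.ofReal_lt_top

lemma msum_bound (σ δ a r : ℝ) (hσ : 1 < σ) (hδ : 0 < δ) (ha0 : 0 ≤ a) (ha : a ≤ 1 / 2)
    (hu : ∀ m : ℤ, δ ≤ |(|(m : ℝ) + a| - r)|) :
    ∑' m : ℤ, ENNReal.ofReal (|(|(m : ℝ) + a| - r)| ^ (-σ)) ≤
      2 * ENNReal.ofReal (δ ^ (-σ)) +
        ENNReal.ofReal ((min δ 1 / 2) ^ (-σ)) * (2 * Zsum σ) := by
  set n₀ : ℤ := round r with hn₀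
  set c₁ : ℝ := min δ 1 / 2 with hc₁
  have hc₁pos : 0 < c₁ := by
    have : (0:ℝ) < min δ 1 := lt_min hδ one_pos
    positivity
  set A : ENNReal := ENNReal.ofReal (δ ^ (-σ)) with hA
  have key : ∀ m : ℤ, ENNReal.ofReal (|(|(m : ℝ) + a| - r)| ^ (-σ)) ≤
      ((if m = n₀ then A else 0) + (if m = -n₀ then A else 0)) +
        ENNReal.ofReal (c₁ ^ (-σ)) *
          (ENNReal.ofReal (|((m - n₀ : ℤ) : ℝ)| ^ (-σ)) +
           ENNReal.ofReal (|((m + n₀ : ℤ) : ℝ)| ^ (-σ))) := by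
    intro m
    have hum := hu m
    have hu0 : 0 < |(|(m : ℝ) + a| - r)| := lt_of_lt_of_le hδ hum
    have hfA : ENNReal.ofReal (|(|(m : ℝ) + a| - r)| ^ (-σ)) ≤ A :=
      ENNReal.ofReal_le_ofReal
        (Real.rpow_le_rpow_of_nonpos hδ hum (by linarith))
    by_cases h1 : m = n₀
    · rw [if_pos h1]
      exact hfA.trans ((self_le_add_right _ _).trans (self_le_add_right _ _))
    · by_cases h2 : m = -n₀
      · rw [if_neg h1, if_pos h2, zero_add]
        exact hfA.trans (self_le_add_right _ _)
      · -- far case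
        have habs : |m| ≠ n₀ := by
          rcases abs_cases m with ⟨e, _⟩ | ⟨e, _⟩ <;> omega
        have hd1 : (1 : ℤ) ≤ |(|m| - n₀)| := by
          rcases abs_cases (|m| - n₀) with ⟨e, _⟩ | ⟨e, _⟩ <;> omega
        set dR : ℝ := |(|(m : ℝ)| - (n₀ : ℝ))| with hdR
        have hdcast : dR = ((|(|m| - n₀)| : ℤ) : ℝ) := by
          rw [hdR]; push_cast; rfl
        have hdR1 : 1 ≤ dR := by
          rw [hdcast]; exact_mod_cast hd1
        -- u ≥ dR - 1
        have htri : dR ≤ |(|(m : ℝ) + a| - r)| + 1 := by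
          have t1 : |(|(m : ℝ)| - (n₀ : ℝ))| ≤ |(|(m : ℝ)| - r)| + |r - (n₀ : ℝ)| :=
            abs_sub_le _ r _
          have t2 : |(|(m : ℝ)| - r)| ≤ |(|(m : ℝ)| - |(m : ℝ) + a|)| + |(|(m : ℝ) + a| - r)| :=
            abs_sub_le _ _ _
          have h3 : |(|(m : ℝ)| - |(m : ℝ) + a|)| ≤ |((m : ℝ) - ((m : ℝ) + a))| :=
            abs_abs_sub_abs_le_abs_sub _ _
          have h4 : |((m : ℝ) - ((m : ℝ) + a))| = a := by
            rw [show (m : ℝ) - ((m : ℝ) + a) = -a by ring, abs_neg, abs_of_nonneg ha0]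
          have t3 : |r - (n₀ : ℝ)| ≤ 1 / 2 := abs_sub_round r
          rw [hdR]
          rw [h4] at h3
          linarith
        have hfar : c₁ * dR ≤ |(|(m : ℝ) + a| - r)| := by
          rcases le_total dR 2 with hd2 | hd2
          · have : c₁ * dR ≤ c₁ * 2 := mul_le_mul_of_nonneg_left hd2 hc₁pos.le
            have h5 : c₁ * 2 = min δ 1 := by rw [hc₁]; ring
            have h6 : min δ 1 ≤ δ := min_le_left _ _
            linarith
          · have h7 : c₁ ≤ 1 / 2 := by
              rw [hc₁]
              have : min δ 1 ≤ 1 := min_le_right _ _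
              linarith
            have : c₁ * dR ≤ (1 / 2) * dR :=
              mul_le_mul_of_nonneg_right h7 (by linarith)
            linarith
        have hcd : 0 < c₁ * dR := by positivity
        have hr1 : |(|(m : ℝ) + a| - r)| ^ (-σ) ≤ (c₁ * dR) ^ (-σ) :=
          Real.rpow_le_rpow_of_nonpos hcd hfar (by linarith)
        have hr2 : (c₁ * dR) ^ (-σ) = c₁ ^ (-σ) * dR ^ (-σ) :=
          Real.mul_rpow hc₁pos.le (by linarith)
        have hsplit : ENNReal.ofReal (dR ^ (-σ)) ≤
            ENNReal.ofReal (|((m - n₀ : ℤ) : ℝ)| ^ (-σ)) +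
              ENNReal.ofReal (|((m + n₀ : ℤ) : ℝ)| ^ (-σ)) := by
          rcases abs_cases (m : ℝ) with ⟨e, _⟩ | ⟨e, _⟩
          · have : dR = |((m - n₀ : ℤ) : ℝ)| := by rw [hdR, e]; push_cast; ring_nf
            rw [this]; exact self_le_add_right _ _
          · have : dR = |((m + n₀ : ℤ) : ℝ)| := by
              rw [hdR, e]; push_cast; rw [← abs_neg]; ring_nf
            rw [this]; exact self_le_add_left _ _
        calc ENNReal.ofReal (|(|(m : ℝ) + a| - r)| ^ (-σ))
            ≤ ENNReal.ofReal (c₁ ^ (-σ) * dR ^ (-σ)) := by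
              rw [← hr2]; exact ENNReal.ofReal_le_ofReal hr1
          _ = ENNReal.ofReal (c₁ ^ (-σ)) * ENNReal.ofReal (dR ^ (-σ)) :=
              ENNReal.ofReal_mul (Real.rpow_nonneg hc₁pos.le _)
          _ ≤ ENNReal.ofReal (c₁ ^ (-σ)) *
              (ENNReal.ofReal (|((m - n₀ : ℤ) : ℝ)| ^ (-σ)) +
               ENNReal.ofReal (|((m + n₀ : ℤ) : ℝ)| ^ (-σ))) :=
              mul_le_mul_right hsplit _
          _ ≤ _ := le_add_self
  calc ∑' m : ℤ, ENNReal.ofReal (|(|(m : ℝ) + a| - r)| ^ (-σ))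
      ≤ ∑' m : ℤ, (((if m = n₀ then A else 0) + (if m = -n₀ then A else 0)) +
          ENNReal.ofReal (c₁ ^ (-σ)) *
            (ENNReal.ofReal (|((m - n₀ : ℤ) : ℝ)| ^ (-σ)) +
             ENNReal.ofReal (|((m + n₀ : ℤ) : ℝ)| ^ (-σ)))) := ENNReal.tsum_le_tsum key
    _ = ((∑' m : ℤ, if m = n₀ then A else 0) + (∑' m : ℤ, if m = -n₀ then A else 0)) +
          ENNReal.ofReal (c₁ ^ (-σ)) *
            ((∑' m : ℤ, ENNReal.ofReal (|((m - n₀ : ℤ) : ℝ)| ^ (-σ))) +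
             (∑' m : ℤ, ENNReal.ofReal (|((m + n₀ : ℤ) : ℝ)| ^ (-σ)))) := by
        rw [ENNReal.tsum_add, ENNReal.tsum_add, ENNReal.tsum_mul_left, ENNReal.tsum_add]
    _ = (A + A) + ENNReal.ofReal (c₁ ^ (-σ)) * (Zsum σ + Zsum σ) := by
        have e1 : ∑' m : ℤ, ENNReal.ofReal (|((m - n₀ : ℤ) : ℝ)| ^ (-σ)) = Zsum σ := by
          simpa [Zsum] using
            (Equiv.subRight n₀).tsum_eq (fun j : ℤ => ENNReal.ofReal (|(j : ℝ)| ^ (-σ)))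
        have e2 : ∑' m : ℤ, ENNReal.ofReal (|((m + n₀ : ℤ) : ℝ)| ^ (-σ)) = Zsum σ := by
          simpa [Zsum] using
            (Equiv.addRight n₀).tsum_eq (fun j : ℤ => ENNReal.ofReal (|(j : ℝ)| ^ (-σ)))
        rw [tsum_ite_eq, tsum_ite_eq, e1, e2]
    _ = 2 * A + ENNReal.ofReal (c₁ ^ (-σ)) * (2 * Zsum σ) := by rw [two_mul, two_mul]


/-- (Lemma 4.3 of the paper, with the explicit band functions
`λ_m(l) = (m + a(l))²`.) Under the spectral separation hypothesis `δ > 0`, the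
integral-sum `∫_{-1/2}^{1/2} ∑_m ∑_{k ∈ κℤ_odd, |k| > K} |λ_m(l) - ω²k² + α|^{-σ} dl`
is finite. -/
theorem integral_sum_band_rpow_lt_top (ω α α₀ σ K δ : ℝ) (κ : ℤ)
    (hω : 0 < ω) (hα : 0 ≤ α) (hα₀ : 0 < α₀) (hσ : 1 < σ)
    (hκpos : 0 < κ) (hκodd : Odd κ) (hK : 0 < K)
    (hbig : ∀ k : ℤ, k ∈ kappaOdd κ → K < |(k : ℝ)| → α + α₀ ≤ ω ^ 2 * (k : ℝ) ^ 2)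
    (hδ : 0 < δ)
    (hδinf : ∀ l ∈ Set.Ioc (-(1 / 2) : ℝ) (1 / 2), ∀ m : ℤ, ∀ k : ℤ, k ∈ kappaOdd κ →
      K < |(k : ℝ)| →
      δ ≤ abs (|(m : ℝ) + blochA l| - Real.sqrt (ω ^ 2 * (k : ℝ) ^ 2 - α))) :
    ∫⁻ l in Set.Ioc (-(1 / 2) : ℝ) (1 / 2),
      ∑' (m : ℤ) (k : {k : ℤ // k ∈ kappaOdd κ ∧ K < |(k : ℝ)|}),
        ENNReal.ofReal
          (|((m : ℝ) + blochA l) ^ 2 - ω ^ 2 * ((k : ℤ) : ℝ) ^ 2 + α| ^ (-σ)) < ⊤ := by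
  have hden : (0 : ℝ) < α + α₀ := by linarith
  set c : ℝ := ω * Real.sqrt (α₀ / (α + α₀)) with hc
  have hcpos : 0 < c := mul_pos hω (Real.sqrt_pos.2 (div_pos hα₀ hden))
  set Cm : ENNReal := 2 * ENNReal.ofReal (δ ^ (-σ)) +
      ENNReal.ofReal ((min δ 1 / 2) ^ (-σ)) * (2 * Zsum σ) with hCmdef
  have hCm : Cm ≠ ⊤ := by
    rw [hCmdef]
    refine ENNReal.add_ne_top.2 ⟨ENNReal.mul_ne_top (by simp) ENNReal.ofReal_ne_top,
      ENNReal.mul_ne_top ENNReal.ofReal_ne_top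
        (ENNReal.mul_ne_top (by simp) (Zsum_lt_top hσ).ne)⟩
  set C : ENNReal := ENNReal.ofReal (c ^ (-σ)) * Zsum σ * Cm with hCdef
  have hC : C ≠ ⊤ :=
    ENNReal.mul_ne_top (ENNReal.mul_ne_top ENNReal.ofReal_ne_top (Zsum_lt_top hσ).ne) hCm
  have hbound : ∀ l ∈ Set.Ioc (-(1 / 2) : ℝ) (1 / 2),
      (∑' (m : ℤ) (k : {k : ℤ // k ∈ kappaOdd κ ∧ K < |(k : ℝ)|}),
        ENNReal.ofReal
          (|((m : ℝ) + blochA l) ^ 2 - ω ^ 2 * ((k : ℤ) : ℝ) ^ 2 + α| ^ (-σ))) ≤ C := by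
    intro l hl
    set a : ℝ := blochA l with hadef
    -- per-k facts
    have kfacts : ∀ k : {k : ℤ // k ∈ kappaOdd κ ∧ K < |(k : ℝ)|},
        (∑' m : ℤ, ENNReal.ofReal
          (|((m : ℝ) + a) ^ 2 - ω ^ 2 * ((k : ℤ) : ℝ) ^ 2 + α| ^ (-σ))) ≤
          (ENNReal.ofReal (c ^ (-σ)) * ENNReal.ofReal (|((k : ℤ) : ℝ)| ^ (-σ))) * Cm := by
      intro k
      obtain ⟨kz, hk1, hk2⟩ := k
      simp only
      have hs : α + α₀ ≤ ω ^ 2 * (kz : ℝ) ^ 2 := hbig kz hk1 hk2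
      have hspos : (0 : ℝ) < ω ^ 2 * (kz : ℝ) ^ 2 - α := by linarith
      set r : ℝ := Real.sqrt (ω ^ 2 * (kz : ℝ) ^ 2 - α) with hrdef
      have hr2 : r ^ 2 = ω ^ 2 * (kz : ℝ) ^ 2 - α := Real.sq_sqrt hspos.le
      have hrpos : 0 < r := Real.sqrt_pos.2 hspos
      have hkabs : 0 < |(kz : ℝ)| := lt_trans hK hk2
      have hrck : c * |(kz : ℝ)| ≤ r := by
        have h1 : (c * |(kz : ℝ)|) ^ 2 ≤ ω ^ 2 * (kz : ℝ) ^ 2 - α := by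
          have e : (c * |(kz : ℝ)|) ^ 2 = (ω ^ 2 * (kz : ℝ) ^ 2 * α₀) / (α + α₀) := by
            rw [hc, mul_pow, mul_pow, Real.sq_sqrt (div_pos hα₀ hden).le, sq_abs]
            ring
          rw [e, div_le_iff₀ hden]
          nlinarith [mul_nonneg hα (sub_nonneg.2 hs)]
        calc c * |(kz : ℝ)| = Real.sqrt ((c * |(kz : ℝ)|) ^ 2) :=
              (Real.sqrt_sq (by positivity)).symm
          _ ≤ r := Real.sqrt_le_sqrt h1
      have hu : ∀ m : ℤ, δ ≤ |(|(m : ℝ) + a| - r)| := fun m =>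
        hδinf l hl m kz hk1 hk2
      -- pointwise in m
      have hpt : ∀ m : ℤ,
          ENNReal.ofReal (|((m : ℝ) + a) ^ 2 - ω ^ 2 * (kz : ℝ) ^ 2 + α| ^ (-σ)) ≤
            ENNReal.ofReal (r ^ (-σ)) * ENNReal.ofReal (|(|(m : ℝ) + a| - r)| ^ (-σ)) := by
        intro m
        set u : ℝ := |(|(m : ℝ) + a| - r)| with hudef
        have hupos : 0 < u := lt_of_lt_of_le hδ (hu m)
        have hXf : |((m : ℝ) + a) ^ 2 - ω ^ 2 * (kz : ℝ) ^ 2 + α| =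
            u * (|(m : ℝ) + a| + r) := by
          have e : ((m : ℝ) + a) ^ 2 - ω ^ 2 * (kz : ℝ) ^ 2 + α =
              (|(m : ℝ) + a| - r) * (|(m : ℝ) + a| + r) := by
            linear_combination hr2 - sq_abs ((m : ℝ) + a)
          rw [e, abs_mul, hudef, abs_of_nonneg (by positivity : 0 ≤ |(m : ℝ) + a| + r)]
        have hlb : u * r ≤ |((m : ℝ) + a) ^ 2 - ω ^ 2 * (kz : ℝ) ^ 2 + α| := by
          rw [hXf]
          exact mul_le_mul_of_nonneg_left
            (le_add_of_nonneg_left (abs_nonneg _)) hupos.le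
        have hurpos : 0 < u * r := mul_pos hupos hrpos
        have h1 : |((m : ℝ) + a) ^ 2 - ω ^ 2 * (kz : ℝ) ^ 2 + α| ^ (-σ) ≤
            (u * r) ^ (-σ) :=
          Real.rpow_le_rpow_of_nonpos hurpos hlb (by linarith)
        have h2 : (u * r) ^ (-σ) = r ^ (-σ) * u ^ (-σ) := by
          rw [mul_comm u r]; exact Real.mul_rpow hrpos.le hupos.le
        calc ENNReal.ofReal (|((m : ℝ) + a) ^ 2 - ω ^ 2 * (kz : ℝ) ^ 2 + α| ^ (-σ))
            ≤ ENNReal.ofReal (r ^ (-σ) * u ^ (-σ)) := by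
              rw [← h2]; exact ENNReal.ofReal_le_ofReal h1
          _ = ENNReal.ofReal (r ^ (-σ)) * ENNReal.ofReal (u ^ (-σ)) :=
              ENNReal.ofReal_mul (Real.rpow_nonneg hrpos.le _)
      have hrc : ENNReal.ofReal (r ^ (-σ)) ≤
          ENNReal.ofReal (c ^ (-σ)) * ENNReal.ofReal (|(kz : ℝ)| ^ (-σ)) := by
        have h1 : r ^ (-σ) ≤ (c * |(kz : ℝ)|) ^ (-σ) :=
          Real.rpow_le_rpow_of_nonpos (by positivity) hrck (by linarith)
        have h2 : (c * |(kz : ℝ)|) ^ (-σ) = c ^ (-σ) * |(kz : ℝ)| ^ (-σ) :=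
          Real.mul_rpow hcpos.le (abs_nonneg _)
        calc ENNReal.ofReal (r ^ (-σ)) ≤ ENNReal.ofReal (c ^ (-σ) * |(kz : ℝ)| ^ (-σ)) := by
              rw [← h2]; exact ENNReal.ofReal_le_ofReal h1
          _ = _ := ENNReal.ofReal_mul (Real.rpow_nonneg hcpos.le _)
      calc (∑' m : ℤ, ENNReal.ofReal
            (|((m : ℝ) + a) ^ 2 - ω ^ 2 * (kz : ℝ) ^ 2 + α| ^ (-σ)))
          ≤ ∑' m : ℤ, ENNReal.ofReal (r ^ (-σ)) *
              ENNReal.ofReal (|(|(m : ℝ) + a| - r)| ^ (-σ)) := ENNReal.tsum_le_tsum hpt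
        _ = ENNReal.ofReal (r ^ (-σ)) *
              ∑' m : ℤ, ENNReal.ofReal (|(|(m : ℝ) + a| - r)| ^ (-σ)) :=
            ENNReal.tsum_mul_left
        _ ≤ ENNReal.ofReal (r ^ (-σ)) * Cm := by
            refine mul_le_mul_right ?_ _
            rw [hCmdef]
            exact msum_bound σ δ a r hσ hδ (blochA_nonneg l) (blochA_le_half l) hu
        _ ≤ (ENNReal.ofReal (c ^ (-σ)) * ENNReal.ofReal (|(kz : ℝ)| ^ (-σ))) * Cm :=
            mul_le_mul_left hrc _
    -- assemble
    have hswap : (∑' (m : ℤ) (k : {k : ℤ // k ∈ kappaOdd κ ∧ K < |(k : ℝ)|}),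
        ENNReal.ofReal
          (|((m : ℝ) + a) ^ 2 - ω ^ 2 * ((k : ℤ) : ℝ) ^ 2 + α| ^ (-σ))) =
        ∑' (k : {k : ℤ // k ∈ kappaOdd κ ∧ K < |(k : ℝ)|}) (m : ℤ),
          ENNReal.ofReal
            (|((m : ℝ) + a) ^ 2 - ω ^ 2 * ((k : ℤ) : ℝ) ^ 2 + α| ^ (-σ)) :=
      ENNReal.tsum_comm
    have hsub : (∑' (k : {k : ℤ // k ∈ kappaOdd κ ∧ K < |(k : ℝ)|}),
        ENNReal.ofReal (|((k : ℤ) : ℝ)| ^ (-σ))) ≤ Zsum σ :=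
      ENNReal.tsum_comp_le_tsum_of_injective Subtype.val_injective
        (fun j : ℤ => ENNReal.ofReal (|(j : ℝ)| ^ (-σ)))
    calc (∑' (m : ℤ) (k : {k : ℤ // k ∈ kappaOdd κ ∧ K < |(k : ℝ)|}),
        ENNReal.ofReal
          (|((m : ℝ) + a) ^ 2 - ω ^ 2 * ((k : ℤ) : ℝ) ^ 2 + α| ^ (-σ)))
        = ∑' (k : {k : ℤ // k ∈ kappaOdd κ ∧ K < |(k : ℝ)|}) (m : ℤ),
            ENNReal.ofReal
              (|((m : ℝ) + a) ^ 2 - ω ^ 2 * ((k : ℤ) : ℝ) ^ 2 + α| ^ (-σ)) := hswap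
      _ ≤ ∑' (k : {k : ℤ // k ∈ kappaOdd κ ∧ K < |(k : ℝ)|}),
            (ENNReal.ofReal (c ^ (-σ)) * ENNReal.ofReal (|((k : ℤ) : ℝ)| ^ (-σ))) * Cm :=
          ENNReal.tsum_le_tsum kfacts
      _ = (ENNReal.ofReal (c ^ (-σ)) *
            ∑' (k : {k : ℤ // k ∈ kappaOdd κ ∧ K < |(k : ℝ)|}),
              ENNReal.ofReal (|((k : ℤ) : ℝ)| ^ (-σ))) * Cm := by
          rw [ENNReal.tsum_mul_right, ENNReal.tsum_mul_left]
      _ ≤ (ENNReal.ofReal (c ^ (-σ)) * Zsum σ) * Cm := by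
          exact mul_le_mul_left (mul_le_mul_right hsub _) _
      _ = C := by rw [hCdef]
  calc ∫⁻ l in Set.Ioc (-(1 / 2) : ℝ) (1 / 2),
      ∑' (m : ℤ) (k : {k : ℤ // k ∈ kappaOdd κ ∧ K < |(k : ℝ)|}),
        ENNReal.ofReal
          (|((m : ℝ) + blochA l) ^ 2 - ω ^ 2 * ((k : ℤ) : ℝ) ^ 2 + α| ^ (-σ))
      ≤ ∫⁻ _ in Set.Ioc (-(1 / 2) : ℝ) (1 / 2), C :=
        lintegral_mono_ae ((ae_restrict_mem measurableSet_Ioc).mono hbound)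
    _ = C * volume (Set.Ioc (-(1 / 2) : ℝ) (1 / 2)) := setLIntegral_const _ _
    _ < ⊤ := by
        rw [Real.volume_Ioc]
        exact ENNReal.mul_lt_top hC.lt_top ENNReal.ofReal_lt_top
end

section
/- Let u : ℝ → ℂ be continuous with compact support, and define its Bloch transform ũ(l, x) = ∑_{n ∈ ℤ} u(x + 2πn)·e^{−i·l·(x + 2πn)} for l, x ∈ ℝ. Then ∫_ℝ |u(x)|² dx = ∫_{−1/2}^{1/2} ∫_0^{2π} |ũ(l, x)|² dx dl. -/
/-!
For fixed `x ∈ [0, 2π]` only finitely many translates `u (x + 2πn)`, `n ∈ F`, are nonzero, and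
`ũ(l, x) = e^{-ilx} ∑_{n ∈ F} u (x + 2πn) e^{-2πinl}` is a trigonometric polynomial in `l` up to
a unimodular factor. Parseval on a unit interval gives
`∫_{-1/2}^{1/2} |ũ(l, x)|² dl = ∑_{n ∈ F} |u (x + 2πn)|²`, and after exchanging the order of
integration, integrating this over `x ∈ [0, 2π]` reassembles `∫_ℝ |u|²` from the translates
of `[0, 2π]`.
-/

open MeasureTheory Complex Real ComplexConjugate

section Periodization

variable {E : Type*} [NormedAddCommGroup E] [NormedSpace ℝ E]

theorem MeasureTheory.Integrable.hasSum_intervalIntegral_comp_add_mul {f : ℝ → E}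
    (hf : Integrable f) {T : ℝ} (hT : 0 < T) :
    HasSum (fun n : ℤ => ∫ x in (0 : ℝ)..T, f (x + T * n)) (∫ x, f x) := by
  -- rescale the period-one statement by `T`
  have hscaled := (hf.comp_mul_left' hT.ne').hasSum_intervalIntegral_comp_add_int
  rw [Measure.integral_comp_mul_left, abs_of_pos (inv_pos.2 hT)] at hscaled
  convert hscaled.const_smul T using 1
  · ext n
    simp only [mul_add]
    rw [intervalIntegral.smul_integral_comp_mul_left (fun x => f (x + T * n)), mul_zero, mul_one]
  · rw [smul_inv_smul₀ hT.ne']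

theorem MeasureTheory.Integrable.integral_eq_intervalIntegral_sum_add_mul {f : ℝ → E}
    (hf : Integrable f) {T : ℝ} (hT : 0 < T) {F : Finset ℤ}
    (hF : ∀ n ∉ F, ∀ x ∈ Set.Icc 0 T, f (x + T * n) = 0) :
    ∫ x, f x = ∫ x in (0 : ℝ)..T, ∑ n ∈ F, f (x + T * n) := by
  rw [← (hf.hasSum_intervalIntegral_comp_add_mul hT).tsum_eq, tsum_eq_sum fun n hn => ?_,
    intervalIntegral.integral_finsetSum fun n _ => (hf.comp_add_right _).intervalIntegrable]
  rw [intervalIntegral.integral_congr (g := fun _ => 0) fun x hx => ?_,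
    intervalIntegral.integral_zero]
  exact hF n hn x (by rwa [Set.uIcc_of_le hT.le] at hx)

end Periodization

theorem HasCompactSupport.exists_finset_add_mul_eq_zero {E : Type*} [Zero E] {u : ℝ → E}
    (hc : HasCompactSupport u) {T : ℝ} (hT : T ≠ 0) (a b : ℝ) :
    ∃ F : Finset ℤ, ∀ n ∉ F, ∀ x ∈ Set.Icc a b, u (x + T * n) = 0 := by
  have hK : IsCompact ((fun p : ℝ × ℝ => (p.1 - p.2) / T) '' (tsupport u ×ˢ Set.Icc a b)) :=
    (hc.isCompact.prod isCompact_Icc).image (by fun_prop)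
  -- such `n` lie in the compact image of `tsupport u × [a, b]` under `(y, x) ↦ (y - x) / T`
  have hfin : {n : ℤ | ∃ x ∈ Set.Icc a b, x + T * n ∈ tsupport u}.Finite := by
    refine (Filter.mem_cofinite.1 (Int.tendsto_coe_cofinite hK.compl_mem_cocompact)).subset ?_
    rintro n ⟨x, hx, hxn⟩
    refine Set.not_notMem.2 ⟨(x + T * n, x), ⟨hxn, hx⟩, ?_⟩
    field_simp
    ring
  refine ⟨hfin.toFinset, fun n hn x hx => image_eq_zero_of_notMem_tsupport fun hxn => ?_⟩
  exact hn (hfin.mem_toFinset.2 ⟨x, hx, hxn⟩)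

theorem intervalIntegral_exp_int_mul_eq_ite (k : ℤ) (a : ℝ) :
    ∫ l in a..a + 1, cexp (-2 * π * I * k * l) = if k = 0 then 1 else 0 := by
  split_ifs with hk
  · simp [hk]
  have hc : -2 * π * I * k ≠ 0 := by simp [Real.pi_ne_zero, hk, I_ne_zero]
  have hperiod : cexp (-2 * π * I * k * ↑(a + 1)) = cexp (-2 * π * I * k * a) := by
    rw [show -2 * π * I * k * ↑(a + 1) = -2 * π * I * k * a + (-k : ℤ) * (2 * π * I) by
      push_cast; ring, Complex.exp_add, exp_int_mul_two_pi_mul_I, mul_one]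
  rw [integral_exp_mul_complex hc, hperiod, sub_self, zero_div]

theorem exp_int_mul_mul_conj (n m : ℤ) (l : ℝ) :
    cexp (-2 * π * I * n * l) * conj (cexp (-2 * π * I * m * l)) =
      cexp (-2 * π * I * (n - m : ℤ) * l) := by
  rw [← exp_conj, ← Complex.exp_add]
  congr 1
  simp only [map_mul, map_neg, map_ofNat, conj_ofReal, conj_I, map_intCast]
  push_cast
  ring

theorem integral_norm_sq_sum_exp (F : Finset ℤ) (c : ℤ → ℂ) (a : ℝ) :
    ∫ l in a..a + 1, ‖∑ n ∈ F, c n * cexp (-2 * π * I * n * l)‖ ^ 2 =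
      ∑ n ∈ F, ‖c n‖ ^ 2 := by
  apply ofReal_injective
  calc ((∫ l in a..a + 1, ‖∑ n ∈ F, c n * cexp (-2 * π * I * n * l)‖ ^ 2 : ℝ) : ℂ)
      = ∫ l in a..a + 1, ∑ n ∈ F, ∑ m ∈ F,
          c n * conj (c m) * cexp (-2 * π * I * (n - m : ℤ) * l) := by
        rw [← intervalIntegral.integral_ofReal]
        refine intervalIntegral.integral_congr fun l _ => ?_
        rw [ofReal_pow, ← mul_conj', map_sum, Finset.sum_mul_sum]
        refine Finset.sum_congr rfl fun n _ => Finset.sum_congr rfl fun m _ => ?_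
        rw [map_mul, ← exp_int_mul_mul_conj]
        ring
    _ = ∑ n ∈ F, ∑ m ∈ F, c n * conj (c m) * if n - m = 0 then 1 else 0 := by
        rw [intervalIntegral.integral_finsetSum fun n _ =>
          Continuous.intervalIntegrable (by fun_prop) _ _]
        refine Finset.sum_congr rfl fun n _ => ?_
        rw [intervalIntegral.integral_finsetSum fun m _ =>
          Continuous.intervalIntegrable (by fun_prop) _ _]
        simp only [intervalIntegral.integral_const_mul, intervalIntegral_exp_int_mul_eq_ite]
    _ = ((∑ n ∈ F, ‖c n‖ ^ 2 : ℝ) : ℂ) := by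
        simp [sub_eq_zero, mul_conj']

noncomputable def blochTransform (u : ℝ → ℂ) (l x : ℝ) : ℂ :=
  ∑' n : ℤ, u (x + 2 * π * n) * cexp (-I * l * ((x + 2 * π * n : ℝ) : ℂ))

theorem norm_blochTransform_eq_norm_sum {u : ℝ → ℂ} {F : Finset ℤ} {x : ℝ}
    (hF : ∀ n ∉ F, u (x + 2 * π * n) = 0) (l : ℝ) :
    ‖blochTransform u l x‖ =
      ‖∑ n ∈ F, u (x + 2 * π * n) * cexp (-2 * π * I * n * l)‖ := by
  have hphase : ∀ n : ℤ, cexp (-I * l * ((x + 2 * π * n : ℝ) : ℂ)) =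
      cexp (-I * l * x) * cexp (-2 * π * I * n * l) := fun n => by
    rw [← Complex.exp_add]
    push_cast
    ring_nf
  rw [blochTransform, tsum_eq_sum fun n hn => by simp [hF n hn]]
  simp only [hphase, mul_left_comm _ (cexp (-I * l * x)), ← Finset.mul_sum, norm_mul]
  rw [show -I * l * x = ((-l * x : ℝ) : ℂ) * I by push_cast; ring, norm_exp_ofReal_mul_I,
    one_mul]

theorem intervalIntegral_intervalIntegral_norm_sq_blochTransform {u : ℝ → ℂ}
    (hu : Continuous u) {F : Finset ℤ}
    (hF : ∀ n ∉ F, ∀ x ∈ Set.Icc 0 (2 * π), u (x + 2 * π * n) = 0) :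
    ∫ l in (-(1 / 2) : ℝ)..(1 / 2), ∫ x in (0 : ℝ)..(2 * π),
        ‖blochTransform u l x‖ ^ 2 =
      ∫ x in (0 : ℝ)..(2 * π), ∑ n ∈ F, ‖u (x + 2 * π * n)‖ ^ 2 := by
  set S : ℝ → ℝ → ℝ := fun l x =>
    ‖∑ n ∈ F, u (x + 2 * π * n) * cexp (-2 * π * I * n * l)‖ ^ 2
  have hS : Continuous S.uncurry := by fun_prop
  calc ∫ l in (-(1 / 2) : ℝ)..(1 / 2), ∫ x in (0 : ℝ)..(2 * π), ‖blochTransform u l x‖ ^ 2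
      = ∫ l in (-(1 / 2) : ℝ)..(1 / 2), ∫ x in (0 : ℝ)..(2 * π), S l x := by
        refine intervalIntegral.integral_congr fun l _ =>
          intervalIntegral.integral_congr fun x hx => ?_
        rw [Set.uIcc_of_le two_pi_pos.le] at hx
        rw [norm_blochTransform_eq_norm_sum fun n hn => hF n hn x hx]
    _ = ∫ x in (0 : ℝ)..(2 * π), ∫ l in (-(1 / 2) : ℝ)..(1 / 2), S l x :=
        intervalIntegral_intervalIntegral_swap <|
          (hS.continuousOn.integrableOn_compact (isCompact_uIcc.prod isCompact_uIcc)).mono_set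
            (Set.prod_mono Set.uIoc_subset_uIcc Set.uIoc_subset_uIcc)
    _ = ∫ x in (0 : ℝ)..(2 * π), ∑ n ∈ F, ‖u (x + 2 * π * n)‖ ^ 2 := by
        refine intervalIntegral.integral_congr fun x _ => ?_
        have h := integral_norm_sq_sum_exp F (fun n => u (x + 2 * π * n)) (-(1 / 2))
        rwa [show (-(1 / 2) : ℝ) + 1 = 1 / 2 by norm_num] at h

/-- (Plancherel identity for the Bloch transform, Lemma 3.1.)
For a continuous compactly supported `u : ℝ → ℂ` with Bloch transform
`ũ(l,x) = ∑_{n ∈ ℤ} u(x + 2πn) e^{-il(x + 2πn)}`, one has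
`∫_ℝ |u|² = ∫_{-1/2}^{1/2} ∫_0^{2π} |ũ(l,x)|² dx dl`. -/
theorem bloch_plancherel (u : ℝ → ℂ) (hu : Continuous u) (hc : HasCompactSupport u) :
    ∫ x : ℝ, ‖u x‖ ^ 2 =
      ∫ l in (-(1 / 2) : ℝ)..(1 / 2), ∫ x in (0 : ℝ)..(2 * Real.pi),
        ‖∑' n : ℤ, u (x + 2 * Real.pi * (n : ℝ)) *
            Complex.exp (-Complex.I * (l : ℂ) * ((x + 2 * Real.pi * (n : ℝ) : ℝ) : ℂ))‖ ^ 2 := by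
  obtain ⟨F, hF⟩ := hc.exists_finset_add_mul_eq_zero two_pi_pos.ne' 0 (2 * π)
  have hsupp : HasCompactSupport fun x => ‖u x‖ ^ 2 :=
    hc.comp_left (g := fun z : ℂ => ‖z‖ ^ 2) (by simp)
  have hint : Integrable fun x => ‖u x‖ ^ 2 :=
    (hu.norm.pow 2).integrable_of_hasCompactSupport hsupp
  rw [hint.integral_eq_intervalIntegral_sum_add_mul two_pi_pos
    fun n hn x hx => by simp [hF n hn x hx]]
  exact (intervalIntegral_intervalIntegral_norm_sq_blochTransform hu hF).symm
end
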